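/- arXiv:2512.24546 — 2 statements merged into one kernel-verified Lean document; each statement's English description precedes it below -/
import Mathlib

section
/- Let p be a prime, m, n ≥ 1, and k a natural number with k^{p^n} ≡ 1 (mod p^m). Then for every integer t with 0 ≤ t ≤ m+n, the number of subgroups of G(p,m,n,k) of order p^t equals Σ_{i = max(0, t−n)}^{min(t, m)} card { x : ZMod (p^{m−i}) | S_{i,t−i} · x = 0 }, where for 0 ≤ j ≤ n the integer S_{i,j} := Σ_{ν = 0}^{p^j − 1} k^{p^{n−j}·ν} acts on ZMod (p^{m−i}) via its residue class. -/
/-- The group `AddAut A` is isomorphic to `MulAut (Multiplicative A)`. -/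
def addAutMulEquiv (A : Type*) [AddGroup A] :
    Multiplicative (AddAut A) ≃* MulAut (Multiplicative A) :=
  { AddEquiv.toMultiplicative with
    map_mul' := fun _ _ => rfl }

/-- The homomorphism `φ_k : Multiplicative (ZMod (p^n)) →* MulAut (Multiplicative (ZMod (p^m)))`
sending `Multiplicative.ofAdd 1` to the automorphism `x ↦ k • x` of `ZMod (p^m)`. -/
noncomputable def metaPhi (p m n k : ℕ) (hp : p.Prime)
    (hk : (k : ZMod (p ^ m)) ^ (p ^ n) = 1) :
    Multiplicative (ZMod (p ^ n)) →* MulAut (Multiplicative (ZMod (p ^ m))) :=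
  AddMonoidHom.toMultiplicativeLeft
    (ZMod.lift (p ^ n)
      ⟨zmultiplesHom (Additive (MulAut (Multiplicative (ZMod (p ^ m)))))
          (Additive.ofMul
            (((addAutMulEquiv (ZMod (p ^ m))).toMonoidHom.comp
                (DistribMulAction.toAddAut (ZMod (p ^ m))ˣ (ZMod (p ^ m))))
              (IsUnit.of_pow_eq_one hk (pow_ne_zero n hp.ne_zero)).unit)),
        by
          set J := ((addAutMulEquiv (ZMod (p ^ m))).toMonoidHom.comp
              (DistribMulAction.toAddAut (ZMod (p ^ m))ˣ (ZMod (p ^ m))))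
          set u := (IsUnit.of_pow_eq_one hk (pow_ne_zero n hp.ne_zero)).unit
          have hu : u ^ (p ^ n) = 1 := by
            ext
            push_cast
            rw [IsUnit.unit_spec]
            exact hk
          rw [zmultiplesHom_apply, natCast_zsmul, ← ofMul_pow, ← map_pow, hu,
            map_one, ofMul_one]⟩)

/-- The split metacyclic group `G(p,m,n,k)`. -/
noncomputable abbrev metaG (p m n k : ℕ) (hp : p.Prime)
    (hk : (k : ZMod (p ^ m)) ^ (p ^ n) = 1) : Type :=
  Multiplicative (ZMod (p ^ m)) ⋊[metaPhi p m n k hp hk] Multiplicative (ZMod (p ^ n))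

section MetaAux

open Multiplicative SemidirectProduct Finset

variable {p m n k : ℕ} (hp : p.Prime) (hk : (k : ZMod (p ^ m)) ^ (p ^ n) = 1)

lemma metaPhi_apply (s : ZMod (p ^ n)) (y : ZMod (p ^ m)) :
    metaPhi p m n k hp hk (ofAdd s) (ofAdd y) = ofAdd ((k : ZMod (p ^ m)) ^ s.val * y) := by
  haveI : NeZero (p ^ n) := ⟨(pow_pos hp.pos n).ne'⟩
  set u := (IsUnit.of_pow_eq_one hk (pow_ne_zero n hp.ne_zero)).unit with hu
  have h1 : s = ((s.val : ℤ) : ZMod (p ^ n)) := by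
    push_cast
    exact (ZMod.natCast_rightInverse s).symm
  simp only [metaPhi, AddMonoidHom.toMultiplicativeLeft_apply_apply, toAdd_ofAdd]
  rw [h1, ZMod.lift_coe]
  simp only [zmultiplesHom_apply]
  rw [← ofMul_zpow, toMul_ofMul]
  rw [← map_zpow]
  show ofAdd ((u ^ (s.val : ℤ)) • y) = _
  rw [zpow_natCast, Units.smul_def, Units.val_pow_eq_pow_val, IsUnit.unit_spec, ← h1, smul_eq_mul]

lemma metaG_pow (g : metaG p m n k hp hk) (c : ℕ) :
    g ^ c = ⟨∏ ν ∈ range c, metaPhi p m n k hp hk (g.right ^ ν) g.left, g.right ^ c⟩ := by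
  induction c with
  | zero => simp only [pow_zero, range_zero, prod_empty]; rfl
  | succ c ih =>
      rw [pow_succ, ih]
      refine SemidirectProduct.ext ?_ (by rw [SemidirectProduct.mul_right, pow_succ])
      simp only [SemidirectProduct.mul_left, prod_range_succ]

include hp in
lemma ofAdd_pow_eq (s : ZMod (p ^ n)) (c : ℕ) :
    (ofAdd s) ^ c = ofAdd (((c * s.val : ℕ) : ZMod (p ^ n))) := by
  haveI : NeZero (p ^ n) := ⟨(pow_pos hp.pos n).ne'⟩
  rw [← ofAdd_nsmul]
  congr 1
  push_cast
  rw [ZMod.natCast_val, ZMod.cast_id, nsmul_eq_mul]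

lemma metaG_pow_mk (y : ZMod (p ^ m)) (s : ZMod (p ^ n)) (c : ℕ) :
    (⟨ofAdd y, ofAdd s⟩ : metaG p m n k hp hk) ^ c
      = ⟨ofAdd (((∑ ν ∈ range c, k ^ (s.val * ν) : ℕ) : ZMod (p ^ m)) * y),
          ofAdd (((c * s.val : ℕ) : ZMod (p ^ n)))⟩ := by
  haveI : NeZero (p ^ n) := ⟨(pow_pos hp.pos n).ne'⟩
  have hfac : ∀ ν : ℕ, metaPhi p m n k hp hk ((ofAdd s) ^ ν) (ofAdd y)
      = ofAdd (((k ^ (s.val * ν) : ℕ) : ZMod (p ^ m)) * y) := by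
    intro ν
    rw [ofAdd_pow_eq hp, metaPhi_apply hp hk]
    congr 2
    rw [ZMod.val_natCast, ← pow_eq_pow_mod _ hk, Nat.cast_pow, mul_comm ν s.val]
  rw [metaG_pow]
  refine SemidirectProduct.ext ?_ (ofAdd_pow_eq hp s c)
  show (∏ ν ∈ range c, metaPhi p m n k hp hk ((ofAdd s) ^ ν) (ofAdd y)) = _
  rw [Finset.prod_congr rfl fun ν _ => hfac ν, ← ofAdd_sum]
  congr 1
  push_cast [Finset.sum_mul]
  rfl

lemma card_range_mul_card_ker {α β : Type*} [Group α] [Group β] (f : α →* β) :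
    Nat.card f.range * Nat.card f.ker = Nat.card α := by
  rw [Subgroup.card_eq_card_quotient_mul_card_subgroup f.ker]
  congr 1
  exact (Nat.card_congr (QuotientGroup.quotientKerEquivRange f).toEquiv).symm

/-- The multiplicative version of the reduction map `ZMod q → ZMod r`. -/
def castMul (q r : ℕ) (h : r ∣ q) :
    Multiplicative (ZMod q) →* Multiplicative (ZMod r) :=
  AddMonoidHom.toMultiplicative (ZMod.castHom h (ZMod r)).toAddMonoidHom

lemma castMul_apply (q r : ℕ) (h : r ∣ q) (z : ZMod q) :
    castMul q r h (Multiplicative.ofAdd z)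
      = Multiplicative.ofAdd (ZMod.castHom h (ZMod r) z) := rfl

lemma mem_ker_castMul (q r : ℕ) (h : r ∣ q) (w : Multiplicative (ZMod q)) :
    w ∈ (castMul q r h).ker ↔ ZMod.castHom h (ZMod r) (Multiplicative.toAdd w) = 0 := by
  rw [MonoidHom.mem_ker]
  constructor
  · intro hw
    have : Multiplicative.toAdd (castMul q r h w) = Multiplicative.toAdd (1 : Multiplicative (ZMod r)) := by rw [hw]
    exact this
  · intro hw
    show Multiplicative.ofAdd (ZMod.castHom h (ZMod r) (Multiplicative.toAdd w)) = 1
    rw [hw]; rfl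

include hp in
lemma card_ker_castMul (a b : ℕ) (hba : b ≤ a) :
    Nat.card ((castMul (p ^ a) (p ^ b) (pow_dvd_pow p hba)).ker) = p ^ (a - b) := by
  haveI : NeZero (p ^ a) := ⟨(pow_pos hp.pos a).ne'⟩
  haveI : NeZero (p ^ b) := ⟨(pow_pos hp.pos b).ne'⟩
  set f := castMul (p ^ a) (p ^ b) (pow_dvd_pow p hba) with hf
  have hsur : Function.Surjective f := by
    intro z
    refine ⟨Multiplicative.ofAdd (((Multiplicative.toAdd z).val : ℕ) : ZMod (p ^ a)), ?_⟩
    rw [castMul_apply, map_natCast, ZMod.natCast_rightInverse]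
    rfl
  have hrange : f.range = ⊤ := MonoidHom.range_eq_top.mpr hsur
  have h1 := card_range_mul_card_ker f
  rw [hrange, Subgroup.card_top] at h1
  have h2 : Nat.card (Multiplicative (ZMod (p ^ b))) = p ^ b := by
    rw [Nat.card_congr (Multiplicative.toAdd (α := ZMod (p ^ b))), Nat.card_zmod]
  have h3 : Nat.card (Multiplicative (ZMod (p ^ a))) = p ^ a := by
    rw [Nat.card_congr (Multiplicative.toAdd (α := ZMod (p ^ a))), Nat.card_zmod]
  rw [h2, h3] at h1
  have : p ^ b * Nat.card f.ker = p ^ b * p ^ (a - b) := by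
    rw [h1, ← pow_add, Nat.add_sub_cancel' hba]
  exact Nat.eq_of_mul_eq_mul_left (pow_pos hp.pos b) this

include hp in
lemma castHom_eq_zero_iff (a b : ℕ) (hba : b ≤ a) (z : ZMod (p ^ a)) :
    ZMod.castHom (pow_dvd_pow p hba) (ZMod (p ^ b)) z = 0 ↔ p ^ b ∣ z.val := by
  haveI : NeZero (p ^ a) := ⟨(pow_pos hp.pos a).ne'⟩
  haveI : NeZero (p ^ b) := ⟨(pow_pos hp.pos b).ne'⟩
  conv_lhs => rw [show z = ((z.val : ℕ) : ZMod (p ^ a)) from (ZMod.natCast_rightInverse z).symm]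
  rw [map_natCast]
  exact ZMod.natCast_eq_zero_iff _ _

/-- The partial geometric sums `S_{j}(c) = Σ_{ν<c} k^{p^{n-j} ν}`. -/
def Snat (p n k j c : ℕ) : ℕ := ∑ ν ∈ Finset.range c, k ^ (p ^ (n - j) * ν)

lemma Snat_add (p n k j : ℕ) (f₁ f₂ : ℕ) :
    Snat p n k j (f₁ + f₂)
      = Snat p n k j f₁ + k ^ (p ^ (n - j) * f₁) * Snat p n k j f₂ := by
  unfold Snat
  rw [Finset.sum_range_add, Finset.mul_sum]
  congr 1
  refine Finset.sum_congr rfl fun ν _ => ?_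
  rw [Nat.mul_add, pow_add]

lemma Snat_one (p n k j : ℕ) : Snat p n k j 1 = 1 := by
  simp [Snat]

instance metaG_finite : Finite (metaG p m n k hp hk) := by
  haveI : NeZero (p ^ m) := ⟨(pow_pos hp.pos m).ne'⟩
  haveI : NeZero (p ^ n) := ⟨(pow_pos hp.pos n).ne'⟩
  exact Finite.of_surjective
    (fun z : Multiplicative (ZMod (p ^ m)) × Multiplicative (ZMod (p ^ n)) =>
      (⟨z.1, z.2⟩ : metaG p m n k hp hk))
    (fun g => ⟨(g.left, g.right), rfl⟩)

lemma eq_inl_of_right_eq_one (g : metaG p m n k hp hk) (h : g.right = 1) :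
    g = SemidirectProduct.inl g.left := by
  refine SemidirectProduct.ext rfl ?_
  rw [h]; rfl

noncomputable def kerEquivComapInl (K : Subgroup (metaG p m n k hp hk)) :
    ((SemidirectProduct.rightHom.comp K.subtype).ker)
      ≃ (K.comap (SemidirectProduct.inl :
          Multiplicative (ZMod (p ^ m)) →* metaG p m n k hp hk)) where
  toFun w := ⟨(w.1 : metaG p m n k hp hk).left, by
    have hw : ((w.1 : metaG p m n k hp hk)).right = 1 := w.2
    have := eq_inl_of_right_eq_one hp hk _ hw
    simp only [Subgroup.mem_comap, ← this]
    exact w.1.2⟩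
  invFun z := ⟨⟨SemidirectProduct.inl z.1, z.2⟩, by
    simp [MonoidHom.mem_ker]⟩
  left_inv w := by
    have hw : ((w.1 : metaG p m n k hp hk)).right = 1 := w.2
    have := eq_inl_of_right_eq_one hp hk _ hw
    ext : 2
    exact this.symm
  right_inv z := rfl

lemma range_eq_map (K : Subgroup (metaG p m n k hp hk)) :
    (SemidirectProduct.rightHom.comp K.subtype).range
      = K.map SemidirectProduct.rightHom := by
  rw [MonoidHom.range_comp, Subgroup.range_subtype]

lemma card_decomp (K : Subgroup (metaG p m n k hp hk)) :
    Nat.card K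
      = Nat.card (K.map (SemidirectProduct.rightHom
            : metaG p m n k hp hk →* Multiplicative (ZMod (p ^ n))))
        * Nat.card (K.comap (SemidirectProduct.inl :
            Multiplicative (ZMod (p ^ m)) →* metaG p m n k hp hk)) := by
  rw [← card_range_mul_card_ker (SemidirectProduct.rightHom.comp K.subtype),
    range_eq_map hp hk]
  congr 1
  exact Nat.card_congr (kerEquivComapInl hp hk K)

include hp hk in
lemma kbar_pow (r : ℕ) (hr : r ≤ m) : ((k : ZMod (p ^ (m - r)))) ^ (p ^ n) = 1 := by
  have := congrArg (ZMod.castHom (pow_dvd_pow p (Nat.sub_le m r)) (ZMod (p ^ (m - r)))) hk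
  rwa [map_pow, map_natCast, map_one] at this

include hp hk in
lemma Sbar_add_mul (i j : ℕ) (x : ZMod (p ^ (m - i)))
    (hx : ((Snat p n k j (p ^ j) : ℕ) : ZMod (p ^ (m - i))) * x = 0) (f c : ℕ) :
    ((Snat p n k j (f + c * p ^ j) : ℕ) : ZMod (p ^ (m - i))) * x
      = ((Snat p n k j f : ℕ) : ZMod (p ^ (m - i))) * x := by
  induction c with
  | zero => simp
  | succ c ih =>
      have hstep : f + (c + 1) * p ^ j = (f + c * p ^ j) + p ^ j := by ring
      rw [hstep, Snat_add]
      push_cast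
      rw [add_mul, mul_assoc, hx, mul_zero, add_zero, ih]

include hp hk in
lemma Sbar_congr (i j : ℕ) (x : ZMod (p ^ (m - i)))
    (hx : ((Snat p n k j (p ^ j) : ℕ) : ZMod (p ^ (m - i))) * x = 0) {f f' : ℕ}
    (hff : f ≡ f' [MOD p ^ j]) :
    ((Snat p n k j f : ℕ) : ZMod (p ^ (m - i))) * x
      = ((Snat p n k j f' : ℕ) : ZMod (p ^ (m - i))) * x := by
  rcases le_total f f' with h | h
  · obtain ⟨c, hc⟩ := (Nat.modEq_iff_dvd' h).mp hff
    have h2 : f' = f + c * p ^ j := by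
      rw [mul_comm c (p ^ j), ← hc, Nat.add_sub_cancel' h]
    rw [h2, Sbar_add_mul hp hk i j x hx]
  · obtain ⟨c, hc⟩ := (Nat.modEq_iff_dvd' h).mp hff.symm
    have h2 : f = f' + c * p ^ j := by
      rw [mul_comm c (p ^ j), ← hc, Nat.add_sub_cancel' h]
    rw [h2, Sbar_add_mul hp hk i j x hx]

/-- Membership predicate of the subgroup attached to `(i, j, x)`. -/
def HsubP (i j : ℕ) (x : ZMod (p ^ (m - i))) (w : metaG p m n k hp hk) : Prop :=
  ∃ f : ℕ,
    w.right = Multiplicative.ofAdd (((f * p ^ (n - j) : ℕ) : ZMod (p ^ n))) ∧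
    ZMod.castHom (pow_dvd_pow p (Nat.sub_le m i)) (ZMod (p ^ (m - i)))
        (Multiplicative.toAdd w.left)
      = ((Snat p n k j f : ℕ) : ZMod (p ^ (m - i))) * x

lemma HsubP_one (i j : ℕ) (x : ZMod (p ^ (m - i))) : HsubP hp hk i j x 1 := by
  refine ⟨0, ?_, ?_⟩ <;> simp [Snat] <;> rfl

lemma HsubP_mul (i j : ℕ) (x : ZMod (p ^ (m - i))) (hi : i ≤ m) {w₁ w₂ : metaG p m n k hp hk}
    (h₁ : HsubP hp hk i j x w₁) (h₂ : HsubP hp hk i j x w₂) : HsubP hp hk i j x (w₁ * w₂) := by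
  obtain ⟨f₁, hr₁, hl₁⟩ := h₁
  obtain ⟨f₂, hr₂, hl₂⟩ := h₂
  refine ⟨f₁ + f₂, ?_, ?_⟩
  · rw [SemidirectProduct.mul_right, hr₁, hr₂, ← ofAdd_add]
    congr 1
    push_cast
    ring
  · rw [SemidirectProduct.mul_left, toAdd_mul, map_add, hl₁]
    have hphi : metaPhi p m n k hp hk w₁.right w₂.left
        = ofAdd ((k : ZMod (p ^ m)) ^ (((f₁ * p ^ (n - j) : ℕ) : ZMod (p ^ n)).val)
            * toAdd w₂.left) := by
      have h0 := metaPhi_apply hp hk (((f₁ * p ^ (n - j) : ℕ) : ZMod (p ^ n))) (toAdd w₂.left)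
      rw [ofAdd_toAdd] at h0
      rw [hr₁, h0]
    rw [hphi, toAdd_ofAdd, map_mul, map_pow, map_natCast, hl₂, ZMod.val_natCast,
      ← pow_eq_pow_mod _ (kbar_pow hp hk i hi), Snat_add]
    push_cast
    ring

lemma HsubP_pow (i j : ℕ) (x : ZMod (p ^ (m - i))) (hi : i ≤ m) {w : metaG p m n k hp hk}
    (h : HsubP hp hk i j x w) (c : ℕ) : HsubP hp hk i j x (w ^ c) := by
  induction c with
  | zero => rw [pow_zero]; exact HsubP_one hp hk i j x
  | succ c ih => rw [pow_succ]; exact HsubP_mul hp hk i j x hi ih h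

lemma HsubP_inv (i j : ℕ) (x : ZMod (p ^ (m - i))) (hi : i ≤ m) {w : metaG p m n k hp hk}
    (h : HsubP hp hk i j x w) : HsubP hp hk i j x w⁻¹ := by
  have hpos : 0 < orderOf w := orderOf_pos w
  have hww : w⁻¹ = w ^ (orderOf w - 1) := by
    refine inv_eq_of_mul_eq_one_right ?_
    rw [← pow_succ', Nat.sub_add_cancel hpos, pow_orderOf_eq_one]
  rw [hww]
  exact HsubP_pow hp hk i j x hi h _

/-- The subgroup of `G(p,m,n,k)` attached to `(i, j, x)`. -/
def Hsub (i j : ℕ) (hi : i ≤ m) (x : ZMod (p ^ (m - i))) :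
    Subgroup (metaG p m n k hp hk) where
  carrier := {w | HsubP hp hk i j x w}
  one_mem' := HsubP_one hp hk i j x
  mul_mem' := fun h₁ h₂ => HsubP_mul hp hk i j x hi h₁ h₂
  inv_mem' := fun h => HsubP_inv hp hk i j x hi h

lemma mem_Hsub {i j : ℕ} {hi : i ≤ m} {x : ZMod (p ^ (m - i))} {w : metaG p m n k hp hk} :
    w ∈ Hsub hp hk i j hi x ↔ HsubP hp hk i j x w := Iff.rfl

lemma map_Hsub (i j : ℕ) (hi : i ≤ m) (hj : j ≤ n) (x : ZMod (p ^ (m - i))) :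
    (Hsub hp hk i j hi x).map (SemidirectProduct.rightHom
        : metaG p m n k hp hk →* Multiplicative (ZMod (p ^ n)))
      = (castMul (p ^ n) (p ^ (n - j)) (pow_dvd_pow p (Nat.sub_le n j))).ker := by
  haveI : NeZero (p ^ n) := ⟨(pow_pos hp.pos n).ne'⟩
  haveI : NeZero (p ^ (m - i)) := ⟨(pow_pos hp.pos _).ne'⟩
  apply le_antisymm
  · rintro s ⟨w, hw, rfl⟩
    obtain ⟨f, hr, hl⟩ := hw
    rw [mem_ker_castMul]
    show ZMod.castHom _ (ZMod (p ^ (n - j))) (toAdd w.right) = 0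
    rw [hr, toAdd_ofAdd, map_natCast, Nat.cast_mul, ZMod.natCast_self, mul_zero]
  · intro s hs
    rw [mem_ker_castMul] at hs
    rw [castHom_eq_zero_iff hp n (n - j) (Nat.sub_le n j)] at hs
    obtain ⟨f, hf⟩ := hs
    refine ⟨⟨Multiplicative.ofAdd ((Snat p n k j f * x.val : ℕ) : ZMod (p ^ m)),
      Multiplicative.ofAdd ((toAdd s : ZMod (p ^ n)))⟩, ⟨f, ?_, ?_⟩, ?_⟩
    · show Multiplicative.ofAdd (toAdd s) = _
      congr 1
      conv_lhs => rw [show (toAdd s : ZMod (p ^ n)) = (((toAdd s).val : ℕ) : ZMod (p ^ n))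
        from (ZMod.natCast_rightInverse _).symm]
      rw [hf, mul_comm]
    · show ZMod.castHom _ (ZMod (p ^ (m - i))) ((Snat p n k j f * x.val : ℕ) : ZMod (p ^ m)) = _
      rw [map_natCast]
      push_cast
      rw [ZMod.natCast_val, ZMod.cast_id]
    · show Multiplicative.ofAdd (toAdd s) = s
      exact ofAdd_toAdd s

lemma comap_Hsub (i j : ℕ) (hi : i ≤ m) (hj : j ≤ n) (x : ZMod (p ^ (m - i)))
    (hx : ((Snat p n k j (p ^ j) : ℕ) : ZMod (p ^ (m - i))) * x = 0) :
    (Hsub hp hk i j hi x).comap (SemidirectProduct.inl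
        : Multiplicative (ZMod (p ^ m)) →* metaG p m n k hp hk)
      = (castMul (p ^ m) (p ^ (m - i)) (pow_dvd_pow p (Nat.sub_le m i))).ker := by
  haveI : NeZero (p ^ n) := ⟨(pow_pos hp.pos n).ne'⟩
  ext z
  rw [Subgroup.mem_comap, mem_Hsub, mem_ker_castMul]
  constructor
  · rintro ⟨f, hr, hl⟩
    have hr' : (1 : Multiplicative (ZMod (p ^ n)))
        = Multiplicative.ofAdd (((f * p ^ (n - j) : ℕ) : ZMod (p ^ n))) := hr
    have h0 : ((f * p ^ (n - j) : ℕ) : ZMod (p ^ n)) = 0 := by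
      have := congrArg Multiplicative.toAdd hr'
      simpa using this.symm
    rw [ZMod.natCast_eq_zero_iff] at h0
    have hdvd : p ^ j ∣ f := by
      have hsplit : p ^ n = p ^ j * p ^ (n - j) := by
        rw [← pow_add, Nat.add_sub_cancel' hj]
      rw [hsplit] at h0
      have hne : p ^ (n - j) ≠ 0 := (pow_pos hp.pos _).ne'
      exact (Nat.mul_dvd_mul_iff_right (Nat.pos_of_ne_zero hne)).mp h0
    obtain ⟨c, rfl⟩ := hdvd
    have hcongr : ((Snat p n k j (p ^ j * c) : ℕ) : ZMod (p ^ (m - i))) * x = 0 := by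
      have h1 : ((Snat p n k j (0 + c * p ^ j) : ℕ) : ZMod (p ^ (m - i))) * x
          = ((Snat p n k j 0 : ℕ) : ZMod (p ^ (m - i))) * x :=
        Sbar_add_mul hp hk i j x hx 0 c
      rw [mul_comm (p ^ j) c]
      simpa [Snat] using h1
    have hzl : toAdd ((SemidirectProduct.inl z : metaG p m n k hp hk)).left = toAdd z := rfl
    rw [hzl] at hl
    rw [hl, hcongr]
  · intro hz
    refine ⟨0, ?_, ?_⟩
    · show (1 : Multiplicative (ZMod (p ^ n))) = _
      simp
    · have hzl : toAdd ((SemidirectProduct.inl z : metaG p m n k hp hk)).left = toAdd z := rfl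
      rw [hzl, hz]
      simp [Snat]

lemma card_Hsub (i j : ℕ) (hi : i ≤ m) (hj : j ≤ n) (x : ZMod (p ^ (m - i)))
    (hx : ((Snat p n k j (p ^ j) : ℕ) : ZMod (p ^ (m - i))) * x = 0) :
    Nat.card (Hsub hp hk i j hi x) = p ^ (i + j) := by
  rw [card_decomp hp hk, map_Hsub hp hk i j hi hj x, comap_Hsub hp hk i j hi hj x hx,
    card_ker_castMul hp n (n - j) (Nat.sub_le n j),
    card_ker_castMul hp m (m - i) (Nat.sub_le m i),
    Nat.sub_sub_self hj, Nat.sub_sub_self hi, ← pow_add, Nat.add_comm]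

include hp hk in
lemma kbar_pow_congr (r : ℕ) (hr : r ≤ m) {a b : ℕ} (hab : a ≡ b [MOD p ^ n]) :
    (k : ZMod (p ^ (m - r))) ^ a = (k : ZMod (p ^ (m - r))) ^ b := by
  rw [pow_eq_pow_mod a (kbar_pow hp hk r hr), pow_eq_pow_mod b (kbar_pow hp hk r hr), hab]

include hp hk in
lemma cast_Cf (i j : ℕ) (hi : i ≤ m) (y : ZMod (p ^ m)) (f : ℕ) (v : ℕ)
    (hv : v ≡ p ^ (n - j) [MOD p ^ n]) :
    ZMod.castHom (pow_dvd_pow p (Nat.sub_le m i)) (ZMod (p ^ (m - i)))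
      (((∑ ν ∈ Finset.range f, k ^ (v * ν) : ℕ) : ZMod (p ^ m)) * y)
    = ((Snat p n k j f : ℕ) : ZMod (p ^ (m - i)))
      * ZMod.castHom (pow_dvd_pow p (Nat.sub_le m i)) (ZMod (p ^ (m - i))) y := by
  rw [map_mul, map_natCast]
  congr 1
  unfold Snat
  push_cast
  exact Finset.sum_congr rfl fun ν _ => kbar_pow_congr hp hk i hi (hv.mul_right ν)

lemma eq_Hsub_of_card (K : Subgroup (metaG p m n k hp hk)) (t : ℕ)
    (hK : Nat.card K = p ^ t) :
    ∃ (i j : ℕ) (hi : i ≤ m) (hj : j ≤ n) (_ : i + j = t)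
      (x : ZMod (p ^ (m - i)))
      (_ : ((Snat p n k j (p ^ j) : ℕ) : ZMod (p ^ (m - i))) * x = 0),
      Hsub hp hk i j hi x = K := by
  haveI : NeZero (p ^ n) := ⟨(pow_pos hp.pos n).ne'⟩
  haveI : NeZero (p ^ m) := ⟨(pow_pos hp.pos m).ne'⟩
  set A := K.comap (SemidirectProduct.inl
      : Multiplicative (ZMod (p ^ m)) →* metaG p m n k hp hk) with hA
  set B := K.map (SemidirectProduct.rightHom
      : metaG p m n k hp hk →* Multiplicative (ZMod (p ^ n))) with hB
  have hcards : Nat.card K = Nat.card B * Nat.card A := card_decomp hp hk K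
  have hdvdA : Nat.card A ∣ p ^ m := by
    have h1 := Subgroup.card_subgroup_dvd_card A
    rwa [Nat.card_congr (Multiplicative.toAdd (α := ZMod (p ^ m))), Nat.card_zmod] at h1
  have hdvdB : Nat.card B ∣ p ^ n := by
    have h1 := Subgroup.card_subgroup_dvd_card B
    rwa [Nat.card_congr (Multiplicative.toAdd (α := ZMod (p ^ n))), Nat.card_zmod] at h1
  obtain ⟨i, hi, hcardA⟩ := (Nat.dvd_prime_pow hp).mp hdvdA
  obtain ⟨j, hj, hcardB⟩ := (Nat.dvd_prime_pow hp).mp hdvdB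
  have hij : i + j = t := by
    rw [hK, hcardA, hcardB, ← pow_add] at hcards
    have := Nat.pow_right_injective hp.two_le hcards
    omega
  have hAker : A = (castMul (p ^ m) (p ^ (m - i))
      (pow_dvd_pow p (Nat.sub_le m i))).ker := by
    have hle : A ≤ (castMul (p ^ m) (p ^ (m - i))
        (pow_dvd_pow p (Nat.sub_le m i))).ker := by
      intro z hz
      have h1 : (⟨z, hz⟩ : A) ^ (p ^ i) = 1 := by
        rw [← hcardA]; exact pow_card_eq_one'
      have h2 : z ^ (p ^ i) = 1 := by
        have := congrArg (Subtype.val) h1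
        simpa using this
      rw [mem_ker_castMul, castHom_eq_zero_iff hp m (m - i) (Nat.sub_le m i)]
      have h5 : (p ^ i) • (Multiplicative.toAdd z) = 0 := by
        have := congrArg Multiplicative.toAdd h2
        simpa using this
      have h6 : ((p ^ i * (Multiplicative.toAdd z).val : ℕ) : ZMod (p ^ m)) = 0 := by
        calc ((p ^ i * (Multiplicative.toAdd z).val : ℕ) : ZMod (p ^ m))
            = (p ^ i : ℕ) • (((Multiplicative.toAdd z).val : ℕ) : ZMod (p ^ m)) := by
              rw [nsmul_eq_mul, Nat.cast_mul]
          _ = (p ^ i) • (Multiplicative.toAdd z) := by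
              rw [ZMod.natCast_val, ZMod.cast_id]
          _ = 0 := h5
      rw [ZMod.natCast_eq_zero_iff] at h6
      have hsplit : p ^ m = p ^ i * p ^ (m - i) := by
        rw [← pow_add, Nat.add_sub_cancel' hi]
      refine (Nat.mul_dvd_mul_iff_left (pow_pos hp.pos i)).mp ?_
      rw [← hsplit]
      exact h6
    refine Subgroup.eq_of_le_of_card_ge hle ?_
    rw [hcardA, card_ker_castMul hp m (m - i) (Nat.sub_le m i), Nat.sub_sub_self hi]
  have hBker : B = (castMul (p ^ n) (p ^ (n - j))
      (pow_dvd_pow p (Nat.sub_le n j))).ker := by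
    have hle : B ≤ (castMul (p ^ n) (p ^ (n - j))
        (pow_dvd_pow p (Nat.sub_le n j))).ker := by
      intro z hz
      have h1 : (⟨z, hz⟩ : B) ^ (p ^ j) = 1 := by
        rw [← hcardB]; exact pow_card_eq_one'
      have h2 : z ^ (p ^ j) = 1 := by
        have := congrArg (Subtype.val) h1
        simpa using this
      rw [mem_ker_castMul, castHom_eq_zero_iff hp n (n - j) (Nat.sub_le n j)]
      have h5 : (p ^ j) • (Multiplicative.toAdd z) = 0 := by
        have := congrArg Multiplicative.toAdd h2
        simpa using this
      have h6 : ((p ^ j * (Multiplicative.toAdd z).val : ℕ) : ZMod (p ^ n)) = 0 := by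
        calc ((p ^ j * (Multiplicative.toAdd z).val : ℕ) : ZMod (p ^ n))
            = (p ^ j : ℕ) • (((Multiplicative.toAdd z).val : ℕ) : ZMod (p ^ n)) := by
              rw [nsmul_eq_mul, Nat.cast_mul]
          _ = (p ^ j) • (Multiplicative.toAdd z) := by
              rw [ZMod.natCast_val, ZMod.cast_id]
          _ = 0 := h5
      rw [ZMod.natCast_eq_zero_iff] at h6
      have hsplit : p ^ n = p ^ j * p ^ (n - j) := by
        rw [← pow_add, Nat.add_sub_cancel' hj]
      refine (Nat.mul_dvd_mul_iff_left (pow_pos hp.pos j)).mp ?_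
      rw [← hsplit]
      exact h6
    refine Subgroup.eq_of_le_of_card_ge hle ?_
    rw [hcardB, card_ker_castMul hp n (n - j) (Nat.sub_le n j), Nat.sub_sub_self hj]
  have hdB : Multiplicative.ofAdd (((p ^ (n - j) : ℕ) : ZMod (p ^ n))) ∈ B := by
    rw [hBker, mem_ker_castMul, toAdd_ofAdd, map_natCast, ZMod.natCast_self]
  rw [hB, Subgroup.mem_map] at hdB
  obtain ⟨w, hwK, hwr⟩ := hdB
  set dz : ZMod (p ^ n) := ((p ^ (n - j) : ℕ) : ZMod (p ^ n)) with hdz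
  set y : ZMod (p ^ m) := Multiplicative.toAdd w.left with hy
  have hweq : w = ⟨Multiplicative.ofAdd y, Multiplicative.ofAdd dz⟩ := by
    refine SemidirectProduct.ext (ofAdd_toAdd _).symm ?_
    show w.right = _
    rw [← hwr]; rfl
  set x : ZMod (p ^ (m - i)) :=
    ZMod.castHom (pow_dvd_pow p (Nat.sub_le m i)) (ZMod (p ^ (m - i))) y with hx'
  have hvmod : dz.val ≡ p ^ (n - j) [MOD p ^ n] := by
    rw [hdz, ZMod.val_natCast]
    exact Nat.mod_modEq _ _
  have hzero : ∀ f : ℕ, ((f * dz.val : ℕ) : ZMod (p ^ n))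
      = ((f * p ^ (n - j) : ℕ) : ZMod (p ^ n)) := by
    intro f
    rw [ZMod.natCast_eq_natCast_iff]
    exact hvmod.mul_left f
  have hSx : ((Snat p n k j (p ^ j) : ℕ) : ZMod (p ^ (m - i))) * x = 0 := by
    have h1 : w ^ (p ^ j) ∈ K := pow_mem hwK _
    rw [hweq, metaG_pow_mk hp hk] at h1
    have hr0 : ((p ^ j * dz.val : ℕ) : ZMod (p ^ n)) = 0 := by
      rw [hzero (p ^ j), ← pow_add, Nat.add_sub_cancel' hj, ZMod.natCast_self]
    rw [hr0] at h1
    have h2 : Multiplicative.ofAdd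
        (((∑ ν ∈ Finset.range (p ^ j), k ^ (dz.val * ν) : ℕ) : ZMod (p ^ m)) * y) ∈ A := by
      rw [hA, Subgroup.mem_comap]
      exact h1
    rw [hAker, mem_ker_castMul, toAdd_ofAdd,
      cast_Cf hp hk i j hi y (p ^ j) dz.val hvmod] at h2
    exact h2
  refine ⟨i, j, hi, hj, hij, x, hSx, ?_⟩
  have hle : Hsub hp hk i j hi x ≤ K := by
    intro w' hw'
    obtain ⟨f, hr, hl⟩ := hw'
    have hvK : w ^ f ∈ K := pow_mem hwK f
    have hv : w ^ f = (⟨Multiplicative.ofAdd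
        ((((∑ ν ∈ Finset.range f, k ^ (dz.val * ν) : ℕ)) : ZMod (p ^ m)) * y),
        Multiplicative.ofAdd (((f * dz.val : ℕ) : ZMod (p ^ n)))⟩
          : metaG p m n k hp hk) := by
      rw [hweq, metaG_pow_mk hp hk]
    have hrr : w'.right = (w ^ f).right := by
      rw [hv]
      show _ = Multiplicative.ofAdd (((f * dz.val : ℕ) : ZMod (p ^ n)))
      rw [hr, hzero f]
    have hz1 : (w' * (w ^ f)⁻¹).right = 1 := by
      rw [SemidirectProduct.mul_right, SemidirectProduct.inv_right, hrr, mul_inv_cancel]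
    have hz2 : w' * (w ^ f)⁻¹
        = SemidirectProduct.inl ((w' * (w ^ f)⁻¹).left) :=
      eq_inl_of_right_eq_one hp hk _ hz1
    have hzleft : (w' * (w ^ f)⁻¹).left = w'.left * (w ^ f).left⁻¹ := by
      rw [SemidirectProduct.mul_left, SemidirectProduct.inv_left, ← MulAut.mul_apply,
        ← map_mul, hrr, mul_inv_cancel, map_one, MulAut.one_apply]
    have hmem : (w' * (w ^ f)⁻¹).left ∈ A := by
      rw [hAker, mem_ker_castMul, hzleft, toAdd_mul, toAdd_inv, map_add, map_neg, hl]
      have hleft : (w ^ f).left = Multiplicative.ofAdd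
          ((((∑ ν ∈ Finset.range f, k ^ (dz.val * ν) : ℕ)) : ZMod (p ^ m)) * y) := by
        rw [hv]
      rw [hleft, toAdd_ofAdd, cast_Cf hp hk i j hi y f dz.val hvmod, ← hx',
        add_neg_cancel]
    have hmem2 : SemidirectProduct.inl ((w' * (w ^ f)⁻¹).left) ∈ K :=
      Subgroup.mem_comap.mp hmem
    rw [← hz2] at hmem2
    have hfin := mul_mem hmem2 hvK
    rwa [inv_mul_cancel_right] at hfin
  refine Subgroup.eq_of_le_of_card_ge hle ?_
  rw [hK, card_Hsub hp hk i j hi hj x hSx, hij]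

lemma Hsub_card_inj {i i' j j' : ℕ} (hi : i ≤ m) (hi' : i' ≤ m) (hj : j ≤ n) (hj' : j' ≤ n)
    {x : ZMod (p ^ (m - i))} {x' : ZMod (p ^ (m - i'))}
    (hx : ((Snat p n k j (p ^ j) : ℕ) : ZMod (p ^ (m - i))) * x = 0)
    (hx' : ((Snat p n k j' (p ^ j') : ℕ) : ZMod (p ^ (m - i'))) * x' = 0)
    (h : Hsub hp hk i j hi x = Hsub hp hk i' j' hi' x') : i = i' := by
  have h1 := congrArg (Subgroup.comap (SemidirectProduct.inl
      : Multiplicative (ZMod (p ^ m)) →* metaG p m n k hp hk)) h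
  rw [comap_Hsub hp hk i j hi hj x hx, comap_Hsub hp hk i' j' hi' hj' x' hx'] at h1
  have h2 : Nat.card ((castMul (p ^ m) (p ^ (m - i))
      (pow_dvd_pow p (Nat.sub_le m i))).ker) = Nat.card ((castMul (p ^ m) (p ^ (m - i'))
      (pow_dvd_pow p (Nat.sub_le m i'))).ker) := by rw [h1]
  rw [card_ker_castMul hp m (m - i) (Nat.sub_le m i),
    card_ker_castMul hp m (m - i') (Nat.sub_le m i'), Nat.sub_sub_self hi,
    Nat.sub_sub_self hi'] at h2
  exact Nat.pow_right_injective hp.two_le h2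

lemma Hsub_x_inj {i j : ℕ} (hi : i ≤ m) (hj : j ≤ n)
    {x x' : ZMod (p ^ (m - i))}
    (hx : ((Snat p n k j (p ^ j) : ℕ) : ZMod (p ^ (m - i))) * x = 0)
    (hx' : ((Snat p n k j (p ^ j) : ℕ) : ZMod (p ^ (m - i))) * x' = 0)
    (h : Hsub hp hk i j hi x = Hsub hp hk i j hi x') : x = x' := by
  haveI : NeZero (p ^ n) := ⟨(pow_pos hp.pos n).ne'⟩
  haveI : NeZero (p ^ m) := ⟨(pow_pos hp.pos m).ne'⟩
  haveI : NeZero (p ^ (m - i)) := ⟨(pow_pos hp.pos _).ne'⟩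
  rcases Nat.eq_zero_or_pos j with hj0 | hjpos
  · subst hj0
    have e1 : x = 0 := by
      have := hx
      rw [pow_zero, Snat_one, Nat.cast_one, one_mul] at this
      exact this
    have e2 : x' = 0 := by
      have := hx'
      rw [pow_zero, Snat_one, Nat.cast_one, one_mul] at this
      exact this
    rw [e1, e2]
  · -- witness with f = 1
    have hcast : ZMod.castHom (pow_dvd_pow p (Nat.sub_le m i)) (ZMod (p ^ (m - i)))
        ((x.val : ℕ) : ZMod (p ^ m)) = x := by
      rw [map_natCast, ZMod.natCast_val, ZMod.cast_id]
    have hmem : (⟨Multiplicative.ofAdd ((x.val : ℕ) : ZMod (p ^ m)),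
        Multiplicative.ofAdd (((1 * p ^ (n - j) : ℕ) : ZMod (p ^ n)))⟩
          : metaG p m n k hp hk) ∈ Hsub hp hk i j hi x := by
      refine ⟨1, rfl, ?_⟩
      show ZMod.castHom _ (ZMod (p ^ (m - i))) ((x.val : ℕ) : ZMod (p ^ m)) = _
      rw [hcast, Snat_one, Nat.cast_one, one_mul]
    rw [h] at hmem
    obtain ⟨f', hr', hl'⟩ := hmem
    have hr'' : ((1 * p ^ (n - j) : ℕ) : ZMod (p ^ n)) = ((f' * p ^ (n - j) : ℕ)
        : ZMod (p ^ n)) := by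
      have := congrArg Multiplicative.toAdd hr'
      simpa using this
    rw [ZMod.natCast_eq_natCast_iff] at hr''
    have hmodeq : (1 : ℕ) ≡ f' [MOD p ^ j] := by
      have hsplit : p ^ n = p ^ j * p ^ (n - j) := by
        rw [← pow_add, Nat.add_sub_cancel' hj]
      rw [hsplit] at hr''
      exact Nat.ModEq.mul_right_cancel' (pow_pos hp.pos (n - j)).ne' hr''
    have hS : ((Snat p n k j f' : ℕ) : ZMod (p ^ (m - i))) * x'
        = ((Snat p n k j 1 : ℕ) : ZMod (p ^ (m - i))) * x' :=
      Sbar_congr hp hk i j x' hx' hmodeq.symm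
    have hl'' : ZMod.castHom (pow_dvd_pow p (Nat.sub_le m i)) (ZMod (p ^ (m - i)))
        ((x.val : ℕ) : ZMod (p ^ m)) = ((Snat p n k j f' : ℕ) : ZMod (p ^ (m - i))) * x' := hl'
    rw [hcast, hS, Snat_one, Nat.cast_one, one_mul] at hl''
    exact hl''


theorem metaG_subCount_eq_sum_ker' (p m n k : ℕ) (hp : p.Prime)
    (hm : 1 ≤ m) (hn : 1 ≤ n) (hk : (k : ZMod (p ^ m)) ^ (p ^ n) = 1)
    (t : ℕ) (ht : t ≤ m + n) :
    Nat.card {H : Subgroup (metaG p m n k hp hk) // Nat.card H = p ^ t}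
      = ∑ i ∈ Finset.Icc (max 0 (t - n)) (min t m),
          Nat.card {x : ZMod (p ^ (m - i)) |
            ((∑ ν ∈ Finset.range (p ^ (t - i)), k ^ (p ^ (n - (t - i)) * ν) : ℕ) :
                ZMod (p ^ (m - i))) * x = 0} := by
  classical
  haveI : NeZero p := ⟨hp.ne_zero⟩
  have hmax : max 0 (t - n) = t - n := Nat.max_eq_right (Nat.zero_le _)
  have hfacts : ∀ i : ℕ, i ∈ Finset.Icc (max 0 (t - n)) (min t m) →
      i ≤ m ∧ t - i ≤ n ∧ i + (t - i) = t := by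
    intro i hi
    rw [Finset.mem_Icc, hmax] at hi
    have h1 : i ≤ t ∧ i ≤ m := le_min_iff.mp hi.2
    omega
  let F : ((i : {i // i ∈ Finset.Icc (max 0 (t - n)) (min t m)}) ×
      ↥{x : ZMod (p ^ (m - i.1)) |
        ((∑ ν ∈ Finset.range (p ^ (t - i.1)), k ^ (p ^ (n - (t - i.1)) * ν) : ℕ) :
          ZMod (p ^ (m - i.1))) * x = 0})
      → {H : Subgroup (metaG p m n k hp hk) // Nat.card H = p ^ t} :=
    fun z => ⟨Hsub hp hk z.1.1 (t - z.1.1) (hfacts z.1.1 z.1.2).1 z.2.1, by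
      rw [card_Hsub hp hk z.1.1 (t - z.1.1) (hfacts z.1.1 z.1.2).1
        (hfacts z.1.1 z.1.2).2.1 z.2.1 z.2.2, (hfacts z.1.1 z.1.2).2.2]⟩
  have hFbij : Function.Bijective F := by
    constructor
    · rintro ⟨⟨i, hmi⟩, ⟨x, hx⟩⟩ ⟨⟨i', hmi'⟩, ⟨x', hx'⟩⟩ hFz
      have hsub : Hsub hp hk i (t - i) (hfacts i hmi).1 x
          = Hsub hp hk i' (t - i') (hfacts i' hmi').1 x' := congrArg Subtype.val hFz
      have hii : i = i' := Hsub_card_inj hp hk (hfacts i hmi).1 (hfacts i' hmi').1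
        (hfacts i hmi).2.1 (hfacts i' hmi').2.1 hx hx' hsub
      subst hii
      have hxx : x = x' := Hsub_x_inj hp hk (hfacts i hmi).1 (hfacts i hmi).2.1 hx hx' hsub
      subst hxx
      rfl
    · rintro ⟨K, hK⟩
      obtain ⟨i, j, hi, hj, hij, x, hx, hEq⟩ := eq_Hsub_of_card hp hk K t hK
      have hji : t - i = j := by omega
      have hmi : i ∈ Finset.Icc (max 0 (t - n)) (min t m) := by
        rw [Finset.mem_Icc, hmax]
        exact ⟨by omega, le_min (by omega) hi⟩
      have hx2 : ((Snat p n k (t - i) (p ^ (t - i)) : ℕ) : ZMod (p ^ (m - i))) * x = 0 := by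
        rw [hji]; exact hx
      refine ⟨⟨⟨i, hmi⟩, ⟨x, hx2⟩⟩, ?_⟩
      apply Subtype.ext
      have hgoal : Hsub hp hk i (t - i) hi x = K := by rw [hji]; exact hEq
      exact hgoal
  have hcard1 : Nat.card {H : Subgroup (metaG p m n k hp hk) // Nat.card H = p ^ t}
      = Nat.card ((i : {i // i ∈ Finset.Icc (max 0 (t - n)) (min t m)}) ×
        ↥{x : ZMod (p ^ (m - i.1)) |
          ((∑ ν ∈ Finset.range (p ^ (t - i.1)), k ^ (p ^ (n - (t - i.1)) * ν) : ℕ) :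
            ZMod (p ^ (m - i.1))) * x = 0}) :=
    (Nat.card_congr (Equiv.ofBijective F hFbij)).symm
  rw [hcard1, Nat.card_eq_fintype_card, Fintype.card_sigma]
  rw [show ∑ i : {i // i ∈ Finset.Icc (max 0 (t - n)) (min t m)},
      Fintype.card ↥{x : ZMod (p ^ (m - i.1)) |
        ((∑ ν ∈ Finset.range (p ^ (t - i.1)), k ^ (p ^ (n - (t - i.1)) * ν) : ℕ) :
          ZMod (p ^ (m - i.1))) * x = 0}
      = ∑ i : {i // i ∈ Finset.Icc (max 0 (t - n)) (min t m)},
      Nat.card ↥{x : ZMod (p ^ (m - i.1)) |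
        ((∑ ν ∈ Finset.range (p ^ (t - i.1)), k ^ (p ^ (n - (t - i.1)) * ν) : ℕ) :
          ZMod (p ^ (m - i.1))) * x = 0}
    from Finset.sum_congr rfl fun _ _ => Nat.card_eq_fintype_card.symm]
  exact Finset.sum_coe_sort _ fun i => Nat.card ↥{x : ZMod (p ^ (m - i)) |
    ((∑ ν ∈ Finset.range (p ^ (t - i)), k ^ (p ^ (n - (t - i)) * ν) : ℕ) :
      ZMod (p ^ (m - i))) * x = 0}


end MetaAux

/-- The number of subgroups of order `N` of `G`. -/
noncomputable def subCount (G : Type*) [Group G] (N : ℕ) : ℕ :=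
  Nat.card {H : Subgroup G // Nat.card H = N}

/-- The number of subgroups of order `p^t` of `G(p,m,n,k)` equals the sum
over `i` of the cardinality of the kernel of multiplication by
`S_{i,t-i} = Σ_{ν < p^{t-i}} k^{p^{n-(t-i)}·ν}` on `ZMod (p^{m-i})`. -/
theorem metaG_subCount_eq_sum_ker (p m n k : ℕ) (hp : p.Prime)
    (hm : 1 ≤ m) (hn : 1 ≤ n) (hk : (k : ZMod (p ^ m)) ^ (p ^ n) = 1)
    (t : ℕ) (ht : t ≤ m + n) :
    subCount (metaG p m n k hp hk) (p ^ t)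
      = ∑ i ∈ Finset.Icc (max 0 (t - n)) (min t m),
          Nat.card {x : ZMod (p ^ (m - i)) |
            ((∑ ν ∈ Finset.range (p ^ (t - i)), k ^ (p ^ (n - (t - i)) * ν) : ℕ) :
                ZMod (p ^ (m - i))) * x = 0} :=
  metaG_subCount_eq_sum_ker' p m n k hp hm hn hk t ht
end

section
/- Let p be a prime, let G₁ and G₂ be finite p-groups, and let Φ : Subgroup G₁ ≃o Subgroup G₂ be an order isomorphism between their subgroup lattices. Then for every subgroup A of G₁, Nat.card (Φ A) = Nat.card A. -/
lemma height_eq_of_card_eq (p : ℕ) (hp : p.Prime) {G : Type*} [Group G] [Finite G]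
    (hG : IsPGroup p G) : ∀ (n : ℕ) (A : Subgroup G), Nat.card A = p ^ n →
      Order.height A = (n : ℕ∞) := by
  haveI : Fact p.Prime := ⟨hp⟩
  intro n
  induction n using Nat.strong_induction_on with
  | _ n ih =>
    intro A hA
    match n with
    | 0 =>
      have : A = ⊥ := Subgroup.eq_bot_of_card_eq A (by simpa using hA)
      subst this
      simpa [Order.height_eq_zero] using fun b hb => (bot_le.not_lt hb).elim
    | (n+1) =>
      rw [Order.height_eq_iSup_lt_height]
      apply le_antisymm
      · apply iSup₂_le
        intro B hB
        obtain ⟨m, hm⟩ := IsPGroup.iff_card.mp (hG.to_subgroup B)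
        have hdvd : Nat.card B ∣ Nat.card A := Subgroup.card_dvd_of_le hB.le
        have hmn : m ≤ n := by
          by_contra hc
          push_neg at hc
          have : Nat.card A ≤ Nat.card B := by
            rw [hA, hm]
            exact Nat.pow_le_pow_right hp.pos hc
          exact hB.ne (Subgroup.eq_of_le_of_card_ge hB.le this)
        rw [ih m (by omega) B hm]
        exact_mod_cast by exact_mod_cast Nat.succ_le_succ hmn
      · obtain ⟨B, hBA, hBcard⟩ := Sylow.exists_subgroup_le_card_pow_prime_of_le_card
          (n := n) hp hG (by rw [hA]; exact Nat.pow_le_pow_right hp.pos (by omega))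
        have hlt : B < A := lt_of_le_of_ne hBA (by
          intro h
          rw [h, hA] at hBcard
          exact absurd hBcard (Nat.ne_of_lt (Nat.pow_lt_pow_right hp.one_lt (by omega))).symm)
        calc ((n : ℕ∞) + 1) = Order.height B + 1 := by rw [ih n (by omega) B hBcard]
          _ ≤ ⨆ b < A, Order.height b + 1 := le_iSup₂_of_le B hlt le_rfl

/-- An order isomorphism between the subgroup lattices of two finite
`p`-groups preserves the orders of subgroups. -/
theorem card_orderIso_subgroup (p : ℕ) (hp : p.Prime)
    (G₁ G₂ : Type*) [Group G₁] [Group G₂] [Finite G₁] [Finite G₂]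
    (hG₁ : IsPGroup p G₁) (hG₂ : IsPGroup p G₂)
    (Φ : Subgroup G₁ ≃o Subgroup G₂) :
    ∀ A : Subgroup G₁, Nat.card (Φ A) = Nat.card A := by
  haveI : Fact p.Prime := ⟨hp⟩
  intro A
  obtain ⟨n, hn⟩ := IsPGroup.iff_card.mp (hG₁.to_subgroup A)
  obtain ⟨m, hm⟩ := IsPGroup.iff_card.mp (hG₂.to_subgroup (Φ A))
  have h1 : Order.height A = (n : ℕ∞) := height_eq_of_card_eq p hp hG₁ n A hn
  have h2 : Order.height (Φ A) = (m : ℕ∞) := height_eq_of_card_eq p hp hG₂ m (Φ A) hm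
  have := Order.height_orderIso Φ A
  rw [h1, h2] at this
  rw [hn, hm]
  exact_mod_cast congrArg (p ^ ·) (by exact_mod_cast this)
end
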